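/- Let T be a nonempty ℝ-tree, S a nonempty metric space, f : T → S a quasi-isometry with constant N, and z ∈ T a fixed point. The map h : S → T defined by letting h(x) be the unique point with [z, h(x)] = ⋂_{y₀ ∈ f⁻¹(B(x,N))} [z, y₀] is a quasi-isometry with constant M = 9N². -/

import Mathlib

open Metric Set

/-- `f : S → T` is a quasi-isometry with constant `N` (a positive natural number):
every point of `T` lies within distance `N` of the image of `f`, and
`(1/N) d(x,y) - N ≤ d(f x, f y) ≤ N d(x,y) + N` for all `x y`. -/
def IsQuasiIsometryWith {S T : Type*} [MetricSpace S] [MetricSpace T]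
    (N : ℕ) (f : S → T) : Prop :=
  0 < N ∧ (∀ t : T, ∃ s : S, dist t (f s) ≤ (N : ℝ)) ∧
    ∀ x y : S, (1 / (N : ℝ)) * dist x y - N ≤ dist (f x) (f y) ∧
      dist (f x) (f y) ≤ (N : ℝ) * dist x y + N

/-- `f` is a quasi-isometry if it is a quasi-isometry with constant `N` for some `N`. -/
def IsQuasiIsometry {S T : Type*} [MetricSpace S] [MetricSpace T] (f : S → T) : Prop :=
  ∃ N : ℕ, IsQuasiIsometryWith N f
/-- `σ` is a geodesic segment from `x` to `y`: the image of an isometric embedding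
`ρ : [0, d(x,y)] → X` with `ρ 0 = x` and `ρ (d(x,y)) = y`. -/
def IsGeodesicSegment {X : Type*} [MetricSpace X] (σ : Set X) (x y : X) : Prop :=
  ∃ ρ : ℝ → X,
    (∀ s ∈ Icc (0 : ℝ) (dist x y), ∀ t ∈ Icc (0 : ℝ) (dist x y),
      dist (ρ s) (ρ t) = |s - t|) ∧
    ρ 0 = x ∧ ρ (dist x y) = y ∧ σ = ρ '' Icc (0 : ℝ) (dist x y)

/-- A metric space is geodesic if any two points are joined by a geodesic segment. -/
def IsGeodesicSpace (X : Type*) [MetricSpace X] : Prop :=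
  ∀ x y : X, ∃ σ : Set X, IsGeodesicSegment σ x y

/-- A geodesic space is `δ`-hyperbolic if for all `x, y, z` and all choices of geodesic
segments, `[x,y] ⊆ B([x,z] ∪ [y,z], δ)`. -/
def IsDeltaHyperbolic (X : Type*) [MetricSpace X] (δ : ℝ) : Prop :=
  ∀ x y z : X, ∀ σxy σxz σyz : Set X,
    IsGeodesicSegment σxy x y → IsGeodesicSegment σxz x z → IsGeodesicSegment σyz y z →
      ∀ w ∈ σxy, infDist w (σxz ∪ σyz) ≤ δ

/-- An ℝ-tree is a `0`-hyperbolic geodesic metric space. -/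
def IsRTree (X : Type*) [MetricSpace X] : Prop :=
  IsGeodesicSpace X ∧ IsDeltaHyperbolic X 0

/-- A path from `x` to `y`: a continuous map `γ : [0,1] → X` with `γ 0 = x`, `γ 1 = y`. -/
def IsPathBetween {X : Type*} [MetricSpace X] (γ : ℝ → X) (x y : X) : Prop :=
  ContinuousOn γ (Icc (0 : ℝ) 1) ∧ γ 0 = x ∧ γ 1 = y

/-!
The preimage `f⁻¹(B(x,N))` has diameter at most `3N²` by the lower quasi-isometry bound.
In an ℝ-tree, if `y₀` lies in a set `A` of diameter at most `D`, then every segment `[z,y]`,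
`y ∈ A`, contains the initial piece of `[z,y₀]` of length `d(z,y₀) - D`: a point of `[z,y₀]`
closer to `z` than the Gromov product `(y₀|y)_z` cannot lie on `[y₀,y]`, so by `0`-hyperbolicity
(and closedness of segments, for the boundary case) it lies on `[z,y]`. Hence `h x` lies on `[z,y₀]` within `3N²` of `y₀`, so `h` is uniformly close
to a coarse inverse of `f`, and the constant `9N²` comes from the triangle inequality.
-/

lemma dist_apply_zero_eq {X : Type*} [MetricSpace X] {ρ : ℝ → X} {L r : ℝ}
    (hρ : ∀ s ∈ Icc (0 : ℝ) L, ∀ t ∈ Icc (0 : ℝ) L, dist (ρ s) (ρ t) = |s - t|)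
    (hr : r ∈ Icc 0 L) : dist (ρ 0) (ρ r) = r := by
  rw [hρ 0 ⟨le_rfl, hr.1.trans hr.2⟩ r hr, zero_sub, abs_neg, abs_of_nonneg hr.1]

namespace IsGeodesicSegment

variable {X : Type*} [MetricSpace X] {σ : Set X} {x y p q : X}

lemma left_mem (h : IsGeodesicSegment σ x y) : x ∈ σ := by
  obtain ⟨ρ, -, h0, -, rfl⟩ := h
  exact ⟨0, ⟨le_rfl, dist_nonneg⟩, h0⟩

lemma right_mem (h : IsGeodesicSegment σ x y) : y ∈ σ := by
  obtain ⟨ρ, -, -, hd, rfl⟩ := h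
  exact ⟨dist x y, ⟨dist_nonneg, le_rfl⟩, hd⟩

lemma isCompact (h : IsGeodesicSegment σ x y) : IsCompact σ := by
  obtain ⟨ρ, hρ, -, -, rfl⟩ := h
  refine isCompact_Icc.image_of_continuousOn (Metric.continuousOn_iff.mpr ?_)
  intro b hb ε hε
  exact ⟨ε, hε, fun a ha hab => by rwa [hρ a ha b hb, ← Real.dist_eq]⟩

lemma exists_mem_dist_eq (h : IsGeodesicSegment σ x y) {s : ℝ} (hs : s ∈ Icc 0 (dist x y)) :
    ∃ p ∈ σ, dist x p = s := by
  obtain ⟨ρ, hρ, rfl, -, rfl⟩ := h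
  exact ⟨ρ s, mem_image_of_mem ρ hs, dist_apply_zero_eq hρ hs⟩

lemma dist_le (h : IsGeodesicSegment σ x y) (hp : p ∈ σ) : dist x p ≤ dist x y := by
  obtain ⟨ρ, hρ, rfl, -, rfl⟩ := h
  obtain ⟨s, hs, rfl⟩ := hp
  exact (dist_apply_zero_eq hρ hs).trans_le hs.2

lemma dist_eq_abs_sub (h : IsGeodesicSegment σ x y) (hp : p ∈ σ) (hq : q ∈ σ) :
    dist p q = |dist x p - dist x q| := by
  obtain ⟨ρ, hρ, rfl, -, rfl⟩ := h
  obtain ⟨s, hs, rfl⟩ := hp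
  obtain ⟨t, ht, rfl⟩ := hq
  rw [hρ s hs t ht, dist_apply_zero_eq hρ hs, dist_apply_zero_eq hρ ht]

lemma dist_add_dist (h : IsGeodesicSegment σ x y) (hp : p ∈ σ) :
    dist x p + dist p y = dist x y := by
  rw [h.dist_eq_abs_sub hp h.right_mem, abs_of_nonpos (sub_nonpos.mpr (h.dist_le hp))]
  ring

end IsGeodesicSegment

namespace IsRTree

variable {T : Type*} [MetricSpace T] {σ σ' : Set T} {z y y' p : T}

lemma mem_of_two_mul_dist_lt (hT : IsRTree T) (hσ : IsGeodesicSegment σ z y)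
    (hσ' : IsGeodesicSegment σ' z y') (hp : p ∈ σ)
    (hzp : 2 * dist z p < dist z y + dist z y' - dist y y') : p ∈ σ' := by
  obtain ⟨τ, hτ⟩ := hT.1 y y'
  have hclosed : IsClosed (σ' ∪ τ) := hσ'.isCompact.isClosed.union hτ.isCompact.isClosed
  have hinf := hT.2 z y y' σ σ' τ hσ hσ' hτ p hp
  rcases (hclosed.mem_iff_infDist_zero ⟨z, .inl hσ'.left_mem⟩).mpr
    (le_antisymm hinf infDist_nonneg) with hp' | hpτ
  · exact hp'
  · -- points of `τ = [y, y']` are at least the Gromov product `(y|y')_z` away from `z`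
    linarith [hτ.dist_add_dist hpτ, hσ.dist_add_dist hp, dist_triangle z p y', dist_comm y p]

lemma mem_of_two_mul_dist_le (hT : IsRTree T) (hσ : IsGeodesicSegment σ z y)
    (hσ' : IsGeodesicSegment σ' z y') (hp : p ∈ σ)
    (hzp : 2 * dist z p ≤ dist z y + dist z y' - dist y y') : p ∈ σ' := by
  rcases (dist_nonneg (x := z) (y := p)).eq_or_lt with hz | hpos
  · exact dist_eq_zero.mp hz.symm ▸ hσ'.left_mem
  -- `p` is a limit of points of `σ` strictly closer to `z`, which lie on `σ'` by the strict case.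
  rw [← hσ'.isCompact.isClosed.closure_eq, Metric.mem_closure_iff]
  intro ε hε
  set δ := min (ε / 2) (dist z p)
  have hδ : 0 < δ := lt_min (half_pos hε) hpos
  obtain ⟨q, hq, hzq⟩ := hσ.exists_mem_dist_eq (s := dist z p - δ)
    ⟨sub_nonneg.mpr (min_le_right _ _), by linarith [hσ.dist_le hp]⟩
  refine ⟨q, hT.mem_of_two_mul_dist_lt hσ hσ' hq (by linarith), ?_⟩
  rw [hσ.dist_eq_abs_sub hp hq, hzq, sub_sub_cancel, abs_of_pos hδ]
  linarith [min_le_left (ε / 2) (dist z p)]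

lemma dist_le_of_iInter_eq (hT : IsRTree T) {A : Set T} {seg : T → Set T}
    (hseg : ∀ y ∈ A, IsGeodesicSegment (seg y) z y) {w : T}
    (hσ : IsGeodesicSegment σ z w) (hσA : ⋂ y ∈ A, seg y = σ) {y₀ : T} (hy₀ : y₀ ∈ A)
    {D : ℝ} (hD : ∀ y ∈ A, dist y₀ y ≤ D) : dist w y₀ ≤ D := by
  have hwy₀ := (hseg y₀ hy₀).dist_add_dist (mem_iInter₂.mp (hσA ▸ hσ.right_mem) y₀ hy₀)
  by_cases hc : dist z y₀ ≤ D
  · linarith [dist_nonneg (x := z) (y := w)]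
  have hD0 : 0 ≤ D := by simpa using hD y₀ hy₀
  obtain ⟨p, hp, hzp⟩ := (hseg y₀ hy₀).exists_mem_dist_eq (s := dist z y₀ - D)
    ⟨by linarith, by linarith⟩
  have hpσ : p ∈ σ := hσA ▸ mem_iInter₂.mpr fun y hy => by
    refine hT.mem_of_two_mul_dist_le (hseg y₀ hy₀) (hseg y hy) hp ?_
    linarith [hD y hy, dist_triangle z y y₀, dist_comm y y₀]
  linarith [hσ.dist_add_dist hpσ, dist_nonneg (x := p) (y := w)]

end IsRTree

namespace IsQuasiIsometryWith

variable {X Y : Type*} [MetricSpace X] [MetricSpace Y] {N : ℕ} {f : X → Y}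

lemma dist_le_mul_dist_add_sq (hf : IsQuasiIsometryWith N f) (x x' : X) :
    dist x x' ≤ N * dist (f x) (f x') + N ^ 2 := by
  have hN : (0 : ℝ) < N := by exact_mod_cast hf.1
  have h := (hf.2.2 x x').1
  rw [sub_le_iff_le_add, one_div_mul_eq_div, div_le_iff₀ hN] at h
  nlinarith

lemma dist_le_three_mul_sq (hf : IsQuasiIsometryWith N f) {y : Y} {x x' : X}
    (hx : f x ∈ closedBall y N) (hx' : f x' ∈ closedBall y N) : dist x x' ≤ 3 * N ^ 2 := by
  have hff : dist (f x) (f x') ≤ 2 * N := by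
    linarith [dist_triangle_right (f x) (f x') y, mem_closedBall.mp hx, mem_closedBall.mp hx']
  have hN : (0 : ℝ) ≤ N := Nat.cast_nonneg N
  nlinarith [hf.dist_le_mul_dist_add_sq x x']

lemma of_dist_le_three_mul_sq (hf : IsQuasiIsometryWith N f) {g : Y → X}
    (hg : ∀ y x, f x ∈ closedBall y N → dist (g y) x ≤ 3 * N ^ 2) :
    IsQuasiIsometryWith (9 * N ^ 2) g := by
  have hN : (1 : ℝ) ≤ N := by exact_mod_cast hf.1
  have hnear : ∀ y, ∃ x, f x ∈ closedBall y N ∧ dist (g y) x ≤ 3 * N ^ 2 := fun y => by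
    obtain ⟨x, hx⟩ := hf.2.1 y
    exact ⟨x, mem_closedBall'.mpr hx, hg y x (mem_closedBall'.mpr hx)⟩
  refine ⟨by have := hf.1; positivity, fun x => ⟨f x, ?_⟩, fun y y' => ?_⟩
  · rw [dist_comm]
    push_cast
    nlinarith [hg (f x) x (mem_closedBall_self (Nat.cast_nonneg N))]
  obtain ⟨x, hx, hgx⟩ := hnear y
  obtain ⟨x', hx', hgx'⟩ := hnear y'
  rw [mem_closedBall] at hx hx'
  have hd : 0 ≤ dist y y' := dist_nonneg
  have hE : 0 ≤ dist (g y) (g y') := dist_nonneg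
  push_cast
  constructor
  · have hyy' : dist y y' ≤ 9 * N ^ 2 * (dist (g y) (g y') + 9 * N ^ 2) :=
      calc dist y y' ≤ dist (f x) (f x') + 2 * N := by
            linarith [dist_triangle4 y (f x) (f x') y', dist_comm y (f x)]
        _ ≤ N * dist x x' + 3 * N := by linarith [(hf.2.2 x x').2]
        _ ≤ N * (dist (g y) (g y') + 6 * N ^ 2) + 3 * N := by
            gcongr
            linarith [dist_triangle4 x (g y) (g y') x', dist_comm x (g y)]
        _ ≤ 9 * N ^ 2 * (dist (g y) (g y') + 9 * N ^ 2) := by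
            nlinarith [mul_le_mul_of_nonneg_left hN hE, pow_le_pow_right₀ hN (by norm_num : 3 ≤ 4),
              le_self_pow₀ hN (by norm_num : 3 ≠ 0)]
    rw [sub_le_iff_le_add, one_div_mul_eq_div, div_le_iff₀' (by positivity)]
    linarith
  · calc dist (g y) (g y') ≤ dist (g y) x + dist x x' + dist x' (g y') := dist_triangle4 _ _ _ _
      _ ≤ 3 * N ^ 2 + (N * dist (f x) (f x') + N ^ 2) + 3 * N ^ 2 := by
        rw [dist_comm x']
        gcongr
        exact hf.dist_le_mul_dist_add_sq x x'
      _ ≤ 3 * N ^ 2 + (N * (dist y y' + 2 * N) + N ^ 2) + 3 * N ^ 2 := by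
        gcongr
        linarith [dist_triangle4 (f x) y y' (f x'), dist_comm y' (f x')]
      _ ≤ 9 * N ^ 2 * dist y y' + 9 * N ^ 2 := by
        nlinarith [mul_le_mul_of_nonneg_left hN hd]

end IsQuasiIsometryWith

theorem retraction_quasiIsometry_general {T S : Type*} [MetricSpace T] [MetricSpace S]
    (hT : IsRTree T) (f : T → S) (N : ℕ) (hf : IsQuasiIsometryWith N f) (z : T)
    (h : S → T)
    (hh : ∀ x : S, ∀ seg : T → Set T,
      (∀ y₀ ∈ f ⁻¹' closedBall x (N : ℝ), IsGeodesicSegment (seg y₀) z y₀) →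
        ∃ σ : Set T, IsGeodesicSegment σ z (h x) ∧
          (⋂ y₀ ∈ f ⁻¹' closedBall x (N : ℝ), seg y₀) = σ) :
    IsQuasiIsometryWith (9 * N ^ 2) h := by
  choose seg hseg using fun y : T => hT.1 z y
  refine hf.of_dist_le_three_mul_sq fun x y₀ hy₀ => ?_
  obtain ⟨σ, hσ, hσA⟩ := hh x seg fun y _ => hseg y
  exact hT.dist_le_of_iInter_eq (fun y _ => hseg y) hσ hσA hy₀
    fun y hy => hf.dist_le_three_mul_sq hy₀ hy

/-- for `f : T → S` a quasi-isometry with constant `N` from a nonempty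
ℝ-tree to a nonempty metric space and `h : S → T` the map defined by
`[z, h x] = ⋂_{y₀ ∈ f⁻¹(B(x,N))} [z, y₀]`, the map `h` is a quasi-isometry with
constant `M = 9N²`. -/
theorem retraction_quasiIsometry {T S : Type*} [MetricSpace T] [MetricSpace S]
    [Nonempty T] [Nonempty S]
    (hT : IsRTree T) (f : T → S) (N : ℕ) (hf : IsQuasiIsometryWith N f) (z : T)
    (h : S → T)
    (hh : ∀ x : S, ∀ seg : T → Set T,
      (∀ y₀ ∈ f ⁻¹' closedBall x (N : ℝ), IsGeodesicSegment (seg y₀) z y₀) →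
        ∃ σ : Set T, IsGeodesicSegment σ z (h x) ∧
          (⋂ y₀ ∈ f ⁻¹' closedBall x (N : ℝ), seg y₀) = σ) :
    IsQuasiIsometryWith (9 * N ^ 2) h :=
  retraction_quasiIsometry_general hT f N hf z h hh
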